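/- When c = d², the function K_2(y,w) = (w³y + d(y+1)w² + (y² + 2d²)w + d³)/(yw(w+d)) is a first integral of the period-3 map φ̂(y,w) = ((d(y+1)w + d²)/y, d(w+d)/(yw)). -/

import Mathlib

/-- The deformed `A₃` reduced map with `c = e = d²`. -/
def deformedA3sq {F : Type*} [Field F] (d : F) (p : F × F) : F × F :=
  ((d * (p.1 + 1) * p.2 + d ^ 2) / p.1, d * (p.2 + d) / (p.1 * p.2))

/-- The second first integral `K₂` of the deformed `A₃` reduced map with `c = d²`. -/
def deformedA3K2 {F : Type*} [Field F] (d y w : F) : F :=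
  (w ^ 3 * y + d * (y + 1) * w ^ 2 + (y ^ 2 + 2 * d ^ 2) * w + d ^ 3) / (y * w * (w + d))

/-!
Partial fractions give `K₂(y, w) = w + y / (w + d) + d (w + d) / (y w)`, and the last summand is the
second coordinate `w'` of the image `(y', w')`. With `S = y w + w + d` one has `y' = d S / y` and
`w' + d = d S / (y w)`, hence `y' / (w' + d) = w` and `d (w' + d) / (y' w') = y / (w + d)`:
the map permutes the three summands cyclically.
-/

section

variable {F : Type*} [Field F] {d y w : F}

theorem deformedA3K2_eq_add (hy : y ≠ 0) (hw : w ≠ 0) (hwd : w + d ≠ 0) :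
    deformedA3K2 d y w = w + y / (w + d) + (deformedA3sq d (y, w)).2 := by
  unfold deformedA3K2 deformedA3sq
  field_simp
  ring

theorem deformedA3sq_snd (p : F × F) :
    (deformedA3sq d p).2 = d * (p.2 + d) / (p.1 * p.2) :=
  rfl

theorem deformedA3sq_fst_eq : (deformedA3sq d (y, w)).1 = d * (y * w + w + d) / y := by
  unfold deformedA3sq
  ring

theorem deformedA3sq_snd_add_eq (hy : y ≠ 0) (hw : w ≠ 0) :
    (deformedA3sq d (y, w)).2 + d = d * (y * w + w + d) / (y * w) := by
  unfold deformedA3sq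
  field_simp
  ring

theorem ne_zero_of_deformedA3sq_fst_ne_zero (hy' : (deformedA3sq d (y, w)).1 ≠ 0) :
    y ≠ 0 ∧ d ≠ 0 ∧ y * w + w + d ≠ 0 := by
  rw [deformedA3sq_fst_eq] at hy'
  obtain ⟨hS, hy⟩ := div_ne_zero_iff.mp hy'
  exact ⟨hy, mul_ne_zero_iff.mp hS⟩

theorem deformedA3sq_fst_div_snd_add (hw : w ≠ 0) (hy' : (deformedA3sq d (y, w)).1 ≠ 0) :
    (deformedA3sq d (y, w)).1 / ((deformedA3sq d (y, w)).2 + d) = w := by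
  obtain ⟨hy, hd, hS⟩ := ne_zero_of_deformedA3sq_fst_ne_zero hy'
  rw [deformedA3sq_fst_eq, deformedA3sq_snd_add_eq hy hw]
  generalize y * w + w + d = S at hS ⊢
  field_simp

theorem deformedA3sq_snd_deformedA3sq (hw : w ≠ 0) (hwd : w + d ≠ 0)
    (hy' : (deformedA3sq d (y, w)).1 ≠ 0) :
    (deformedA3sq d (deformedA3sq d (y, w))).2 = y / (w + d) := by
  obtain ⟨hy, hd, hS⟩ := ne_zero_of_deformedA3sq_fst_ne_zero hy'
  rw [deformedA3sq_snd, deformedA3sq_fst_eq, deformedA3sq_snd_add_eq hy hw, deformedA3sq_snd]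
  generalize y * w + w + d = S at hS ⊢
  field_simp

end

theorem deformedA3sq_K2_invariant_general {F : Type*} [Field F] (d : F)
    (y w : F) (hy : y ≠ 0) (hw : w ≠ 0) (hwd : w + d ≠ 0)
    (hy' : (deformedA3sq d (y, w)).1 ≠ 0) (hw' : (deformedA3sq d (y, w)).2 ≠ 0)
    (hwd' : (deformedA3sq d (y, w)).2 + d ≠ 0) :
    deformedA3K2 d (deformedA3sq d (y, w)).1 (deformedA3sq d (y, w)).2
      = deformedA3K2 d y w := by
  rw [deformedA3K2_eq_add hy' hw' hwd', deformedA3K2_eq_add hy hw hwd, Prod.mk.eta,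
    deformedA3sq_fst_div_snd_add hw hy', deformedA3sq_snd_deformedA3sq hw hwd hy']
  ring

/-- When `c = d²`, `K₂` is a first integral of the period-3 deformed `A₃` map. -/
theorem deformedA3sq_K2_invariant {F : Type*} [Field F] (d : F) (hd : d ≠ 0)
    (y w : F) (hy : y ≠ 0) (hw : w ≠ 0) (hwd : w + d ≠ 0)
    (hy' : (deformedA3sq d (y, w)).1 ≠ 0) (hw' : (deformedA3sq d (y, w)).2 ≠ 0)
    (hwd' : (deformedA3sq d (y, w)).2 + d ≠ 0) :
    deformedA3K2 d (deformedA3sq d (y, w)).1 (deformedA3sq d (y, w)).2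
      = deformedA3K2 d y w :=
  deformedA3sq_K2_invariant_general d y w hy hw hwd hy' hw' hwd'
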